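/- arXiv:math/0505604 — 5 statements merged into one kernel-verified Lean document; each statement's English description precedes it below -/
import Mathlib

section
/- Let A be the linear operator from L²([0,1]) to L²([0,1]²) defined by (A[h])(y,v) = -e^{αv} ∫₀^y h(s) ds + h(y)/λ(y), where α ∈ ℝ is fixed and λ : [0,1] → ℝ is continuous with λ(y) ≥ c > 0 for all y. Then A is injective, and there exists a constant C > 0 such that ‖A[h]‖_{L²([0,1]²)} ≥ C ‖h‖_{L²([0,1])} for all h ∈ L²([0,1]). -/
open MeasureTheory Set Real

/-!
Write `F y = ∫₀^y h`, `b = ∫₀¹ e^{αv} dv` and `e = h/λ - b F`. For fixed `y`, Jensen's inequality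
in `v` gives `∫₀¹ (A h)(y,v)² dv ≥ e(y)²`, hence `‖A h‖² ≥ ‖e‖²`. Conversely `h` solves the
Volterra equation `h = λ (b F + e)`, so with `M ≥ sup λ` Grönwall's inequality gives
`|F| ≤ M e^{M|b|} ‖e‖₁ ≤ M e^{M|b|} ‖e‖₂`, and then `‖h‖² ≤ D ‖e‖²` for a constant `D` depending
only on `M` and `b`.
-/

theorem sq_integral_le_integral_sq {Ω : Type*} [MeasurableSpace Ω] {μ : Measure Ω}
    [IsProbabilityMeasure μ] {f : Ω → ℝ} (hf : MemLp f 2 μ) :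
    (∫ x, f x ∂μ) ^ 2 ≤ ∫ x, f x ^ 2 ∂μ :=
  (even_two.convexOn_pow).map_integral_le (continuous_pow 2).continuousOn isClosed_univ
    (.of_forall fun _ => mem_univ _) (hf.integrable one_le_two) hf.integrable_sq

theorem integral_sq_le_integral_prod_sq {α β : Type*} [MeasurableSpace α] [MeasurableSpace β]
    {μ : Measure α} {ν : Measure β} [IsFiniteMeasure μ] [IsProbabilityMeasure ν] {K : β → ℝ}
    {f g : α → ℝ} (hK : MemLp K ⊤ ν) (hf : MemLp f ⊤ μ) (hg : MemLp g 2 μ) :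
    ∫ x, (g x - (∫ v, K v ∂ν) * f x) ^ 2 ∂μ ≤ ∫ p, (-K p.2 * f p.1 + g p.1) ^ 2 ∂(μ.prod ν) := by
  have hint : Integrable (fun p : α × β => (-K p.2 * f p.1 + g p.1) ^ 2) (μ.prod ν) :=
    ((((hf.comp_fst ν).mul' (hK.comp_snd μ).neg).mono_exponent le_top).add
      (hg.comp_fst ν)).integrable_sq
  rw [integral_prod _ hint]
  refine integral_mono_of_nonneg (.of_forall fun _ => sq_nonneg _) hint.integral_prod_left
    (.of_forall fun x => ?_)
  have hK2 : MemLp K 2 ν := hK.mono_exponent le_top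
  have hmem : MemLp (fun v => -K v * f x + g x) 2 ν := (hK2.neg.mul_const (f x)).add (memLp_const _)
  have hmean : ∫ v, (-K v * f x + g x) ∂ν = g x - (∫ v, K v ∂ν) * f x := by
    simp only [neg_mul]
    rw [integral_add (f := fun v => -(K v * f x)) ((hK2.integrable one_le_two).mul_const _).neg
      (integrable_const _), integral_neg, integral_mul_const, integral_const]
    simp only [probReal_univ, one_smul]
    ring
  simpa only [hmean] using sq_integral_le_integral_sq hmem

theorem mul_gronwallBound_zero_add (K δ t : ℝ) :
    K * gronwallBound 0 K δ t + δ = δ * exp (K * t) := by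
  rcases eq_or_ne K 0 with rfl | hK
  · simp [gronwallBound_K0]
  · rw [gronwallBound_of_K_ne_0 hK]
    field_simp
    ring

theorem le_mul_exp_of_le_mul_integral_add {u : ℝ → ℝ} {K δ a b : ℝ}
    (hu : ContinuousOn u (Icc a b)) (hK : 0 ≤ K)
    (bound : ∀ x ∈ Icc a b, u x ≤ K * (∫ s in a..x, u s) + δ) :
    ∀ x ∈ Icc a b, u x ≤ δ * exp (K * (x - a)) := by
  intro x hx
  have hab : a ≤ b := hx.1.trans hx.2
  have hui : IntervalIntegrable u volume a b := hu.intervalIntegrable_of_Icc hab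
  set φ : ℝ → ℝ := fun x => ∫ s in a..x, u s
  have hφ : ContinuousOn φ (Icc a b) := by
    simpa [uIcc_of_le hab] using
      intervalIntegral.continuousOn_primitive_interval
        (hu.integrableOn_Icc.mono_set (uIcc_of_le hab).le)
  have hφ' : ∀ y ∈ Ico a b, HasDerivWithinAt φ (u y) (Ici y) y := by
    intro y hy
    have hIcc : Icc a b ∈ nhdsWithin y (Ioi y) :=
      Filter.mem_of_superset (Ioc_mem_nhdsGT_of_mem ⟨le_rfl, hy.2⟩)
        fun s hs => ⟨hy.1.trans hs.1.le, hs.2⟩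
    refine intervalIntegral.integral_hasDerivWithinAt_right (t := Ioi y)
      (hui.mono_set (by simp [uIcc_of_le hab, uIcc_of_le hy.1, Icc_subset_Icc_right hy.2.le]))
      ⟨Icc a b, hIcc, hu.aestronglyMeasurable measurableSet_Icc⟩
      ((hu y ⟨hy.1, hy.2.le⟩).mono_of_mem_nhdsWithin hIcc)
  have hgron := le_gronwallBound_of_liminf_deriv_right_le (δ := 0) (K := K) (ε := δ) hφ
    (fun y hy _ hr => (hφ' y hy).liminf_right_slope_le hr) (by simp [φ])
    (fun y hy => bound y ⟨hy.1, hy.2.le⟩) x hx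
  calc u x ≤ K * φ x + δ := bound x hx
    _ ≤ K * gronwallBound 0 K δ (x - a) + δ := by gcongr
    _ = δ * exp (K * (x - a)) := mul_gronwallBound_zero_add K δ (x - a)

theorem abs_primitive_le_mul_exp {h r : ℝ → ℝ} {K a b : ℝ} (hK : 0 ≤ K)
    (hh : IntegrableOn h (Icc a b)) (hr : IntegrableOn r (Icc a b))
    (hr0 : ∀ s ∈ Icc a b, 0 ≤ r s)
    (bound : ∀ s ∈ Icc a b, |h s| ≤ K * |∫ t in a..s, h t| + r s) :
    ∀ x ∈ Icc a b, |∫ s in a..x, h s| ≤ (∫ s in a..b, r s) * exp (K * (x - a)) := by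
  intro x hx
  have hab : a ≤ b := hx.1.trans hx.2
  have hF : ContinuousOn (fun x => ∫ s in a..x, h s) (Icc a b) := by
    simpa [uIcc_of_le hab] using
      intervalIntegral.continuousOn_primitive_interval (hh.mono_set (uIcc_of_le hab).le)
  have hsub : ∀ {f : ℝ → ℝ}, IntegrableOn f (Icc a b) → ∀ y ∈ Icc a b,
      IntervalIntegrable f volume a y := fun hf y hy =>
    (intervalIntegrable_iff_integrableOn_Icc_of_le hy.1).2
      (hf.mono_set (Icc_subset_Icc_right hy.2))
  refine le_mul_exp_of_le_mul_integral_add hF.abs hK (fun y hy => ?_) x hx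
  have hFi : IntegrableOn (fun s => K * |∫ t in a..s, h t|) (Icc a b) :=
    (hF.abs.integrableOn_compact isCompact_Icc).const_mul K
  calc |∫ s in a..y, h s| ≤ ∫ s in a..y, |h s| :=
        intervalIntegral.abs_integral_le_integral_abs hy.1
    _ ≤ ∫ s in a..y, (K * |∫ t in a..s, h t| + r s) :=
        intervalIntegral.integral_mono_on hy.1 (hsub hh.abs y hy) (hsub (hFi.add hr) y hy)
          fun s hs => bound s ⟨hs.1, hs.2.trans hy.2⟩
    _ = K * (∫ s in a..y, |∫ t in a..s, h t|) + ∫ s in a..y, r s := by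
        rw [intervalIntegral.integral_add (hsub hFi y hy) (hsub hr y hy),
          intervalIntegral.integral_const_mul]
    _ ≤ K * (∫ s in a..y, |∫ t in a..s, h t|) + ∫ s in a..b, r s := by
        gcongr
        exact intervalIntegral.integral_mono_interval le_rfl hy.1 hy.2
          ((ae_restrict_iff' measurableSet_Ioc).2
            (.of_forall fun s hs => hr0 s ⟨hs.1.le, hs.2⟩))
          (hsub hr b ⟨hab, le_rfl⟩)

theorem ContinuousOn.memLp_top_of_isCompact {α E : Type*} [TopologicalSpace α]
    [MeasurableSpace α] [OpensMeasurableSpace α] [NormedAddCommGroup E] {f : α → E} {s : Set α}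
    {μ : Measure α} (hf : ContinuousOn f s) (hs : IsCompact s) (hsm : MeasurableSet s) :
    MemLp f ⊤ (μ.restrict s) := by
  obtain ⟨C, hC⟩ := hs.exists_bound_of_continuousOn hf
  exact memLp_top_of_bound (hf.aestronglyMeasurable_of_isCompact hs hsm) C
    ((ae_restrict_iff' hsm).2 (.of_forall hC))

theorem MeasureTheory.MemLp.div_of_le {α : Type*} [MeasurableSpace α] {μ : Measure α}
    {p : ENNReal} {f g : α → ℝ} {c : ℝ} (hf : MemLp f p μ) (hg : AEStronglyMeasurable g μ)
    (hc : 0 < c) (hle : ∀ᵐ x ∂μ, c ≤ g x) : MemLp (fun x => f x / g x) p μ := by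
  refine (hf.const_mul c⁻¹).of_le (hf.1.aemeasurable.div hg.aemeasurable).aestronglyMeasurable
    (hle.mono fun x hx => ?_)
  rw [norm_div, norm_mul, norm_inv, Real.norm_of_nonneg hc.le,
    Real.norm_of_nonneg (hc.trans_le hx).le, inv_mul_eq_div]
  exact div_le_div_of_nonneg_left (norm_nonneg _) hc hx

theorem abs_primitive_le_of_eq_mul_primitive_add {h lam e : ℝ → ℝ} {b M : ℝ}
    (hlam : ∀ y ∈ Icc (0:ℝ) 1, |lam y| ≤ M) (hh : IntegrableOn h (Icc 0 1))
    (he : MemLp e 2 (volume.restrict (Icc 0 1)))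
    (heq : ∀ y ∈ Icc (0:ℝ) 1, h y = lam y * (b * (∫ s in (0:ℝ)..y, h s) + e y)) :
    ∀ x ∈ Icc (0:ℝ) 1,
      |∫ s in (0:ℝ)..x, h s| ≤ M * exp (M * |b|) * √(∫ y in Icc (0:ℝ) 1, e y ^ 2) := by
  have : IsProbabilityMeasure (volume.restrict (Icc (0:ℝ) 1)) := ⟨by simp⟩
  have hM : 0 ≤ M := (abs_nonneg _).trans (hlam 0 ⟨le_rfl, zero_le_one⟩)
  have he_abs : ∫ y in Icc (0:ℝ) 1, |e y| ≤ √(∫ y in Icc (0:ℝ) 1, e y ^ 2) := by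
    have := sq_integral_le_integral_sq (f := fun y => |e y|) he.abs
    simp only [sq_abs] at this
    exact le_sqrt_of_sq_le this
  intro x hx
  have hgron := abs_primitive_le_mul_exp (K := M * |b|) (r := fun s => M * |e s|)
    (by positivity) hh ((he.integrable one_le_two).abs.const_mul M)
    (fun s _ => by positivity) (fun s hs => ?_) x hx
  · have hexp : exp (M * |b| * (x - 0)) ≤ exp (M * |b|) :=
      exp_le_exp.2 (by nlinarith [hx.2, mul_nonneg hM (abs_nonneg b)])
    calc |∫ s in (0:ℝ)..x, h s|
        ≤ (∫ s in (0:ℝ)..1, M * |e s|) * exp (M * |b| * (x - 0)) := hgron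
      _ ≤ (M * √(∫ y in Icc (0:ℝ) 1, e y ^ 2)) * exp (M * |b|) := by
        rw [intervalIntegral.integral_of_le zero_le_one, ← integral_Icc_eq_integral_Ioc,
          integral_const_mul]
        gcongr
      _ = M * exp (M * |b|) * √(∫ y in Icc (0:ℝ) 1, e y ^ 2) := by ring
  · calc |h s| = |lam s| * |b * (∫ t in (0:ℝ)..s, h t) + e s| := by rw [heq s hs, abs_mul]
      _ ≤ M * (|b| * |∫ t in (0:ℝ)..s, h t| + |e s|) := by
        gcongr
        · exact hlam s hs
        · exact (abs_add_le _ _).trans_eq (by rw [abs_mul])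
      _ = M * |b| * |∫ t in (0:ℝ)..s, h t| + M * |e s| := by ring

theorem integral_sq_le_of_eq_mul_primitive_add {h lam e : ℝ → ℝ} {b M : ℝ}
    (hlam : ∀ y ∈ Icc (0:ℝ) 1, |lam y| ≤ M)
    (hh : MemLp h 2 (volume.restrict (Icc 0 1))) (he : MemLp e 2 (volume.restrict (Icc 0 1)))
    (heq : ∀ y ∈ Icc (0:ℝ) 1, h y = lam y * (b * (∫ s in (0:ℝ)..y, h s) + e y)) :
    ∫ y in Icc (0:ℝ) 1, h y ^ 2 ≤
      M ^ 2 * (2 * b ^ 2 * (M * exp (M * |b|)) ^ 2 + 2) * ∫ y in Icc (0:ℝ) 1, e y ^ 2 := by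
  have : IsProbabilityMeasure (volume.restrict (Icc (0:ℝ) 1)) := ⟨by simp⟩
  have hF := abs_primitive_le_of_eq_mul_primitive_add hlam (hh.integrable one_le_two) he heq
  set F : ℝ → ℝ := fun x => ∫ s in (0:ℝ)..x, h s
  set B := M * exp (M * |b|)
  set ε := √(∫ y in Icc (0:ℝ) 1, e y ^ 2)
  have hε : ε ^ 2 = ∫ y in Icc (0:ℝ) 1, e y ^ 2 := sq_sqrt (integral_nonneg fun _ => sq_nonneg _)
  have hpt : ∀ y ∈ Icc (0:ℝ) 1, h y ^ 2 ≤ M ^ 2 * (2 * b ^ 2 * B ^ 2 * ε ^ 2 + 2 * e y ^ 2) := by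
    intro y hy
    have hFy : F y ^ 2 ≤ B ^ 2 * ε ^ 2 := by
      rw [← mul_pow]; exact sq_le_sq' (abs_le.1 (hF y hy)).1 (abs_le.1 (hF y hy)).2
    calc h y ^ 2 = lam y ^ 2 * (b * F y + e y) ^ 2 := by rw [heq y hy]; ring
      _ ≤ M ^ 2 * (2 * b ^ 2 * F y ^ 2 + 2 * e y ^ 2) :=
        mul_le_mul (sq_le_sq' (abs_le.1 (hlam y hy)).1 (abs_le.1 (hlam y hy)).2)
          (by nlinarith [sq_nonneg (b * F y - e y)]) (sq_nonneg _) (sq_nonneg M)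
      _ ≤ M ^ 2 * (2 * b ^ 2 * B ^ 2 * ε ^ 2 + 2 * e y ^ 2) := by
        nlinarith [mul_le_mul_of_nonneg_left hFy (sq_nonneg b), sq_nonneg M]
  have hint : Integrable (fun y => M ^ 2 * (2 * b ^ 2 * B ^ 2 * ε ^ 2 + 2 * e y ^ 2))
      (volume.restrict (Icc (0:ℝ) 1)) :=
    ((integrable_const _).add (he.integrable_sq.const_mul 2)).const_mul _
  calc ∫ y in Icc (0:ℝ) 1, h y ^ 2
      ≤ ∫ y in Icc (0:ℝ) 1, M ^ 2 * (2 * b ^ 2 * B ^ 2 * ε ^ 2 + 2 * e y ^ 2) :=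
        setIntegral_mono_on hh.integrable_sq hint measurableSet_Icc hpt
    _ = M ^ 2 * (2 * b ^ 2 * B ^ 2 + 2) * ∫ y in Icc (0:ℝ) 1, e y ^ 2 := by
        rw [integral_const_mul, integral_add (integrable_const _) (he.integrable_sq.const_mul 2),
          integral_const_mul (2:ℝ), integral_const, ← hε]
        simp only [probReal_univ, one_smul]
        ring

theorem ae_eq_zero_of_mul_integral_sq_le {α β : Type*} [MeasurableSpace α] [MeasurableSpace β]
    {μ : Measure α} {ν : Measure β} {f : α → ℝ} {g : β → ℝ} {C : ℝ} (hC : 0 < C)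
    (hf : MemLp f 2 μ) (hle : C * ∫ x, f x ^ 2 ∂μ ≤ ∫ y, g y ^ 2 ∂ν) (hg : ∀ᵐ y ∂ν, g y = 0) :
    ∀ᵐ x ∂μ, f x = 0 := by
  have hg2 : ∫ y, g y ^ 2 ∂ν = 0 :=
    integral_eq_zero_of_ae (hg.mono fun y hy => by simp only [Pi.zero_apply, hy]; norm_num)
  have hf2 : ∫ x, f x ^ 2 ∂μ = 0 :=
    le_antisymm (nonpos_of_mul_nonpos_right (hle.trans_eq hg2) hC)
      (integral_nonneg fun x => sq_nonneg (f x))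
  filter_upwards
    [(integral_eq_zero_iff_of_nonneg (fun x => sq_nonneg (f x)) hf.integrable_sq).1 hf2] with x hx
  exact pow_eq_zero_iff two_ne_zero |>.1 hx

/-- The operator `A[h](y,v) = -e^{αv} ∫₀^y h(s) ds + h(y)/λ(y)` from `L²([0,1])` to
`L²([0,1]²)` is injective and bounded below: there is `C > 0` with
`‖A[h]‖_{L²([0,1]²)} ≥ C ‖h‖_{L²([0,1])}` for all `h ∈ L²([0,1])`. -/
theorem stmt0 (α : ℝ) (lam : ℝ → ℝ) (hlamc : ContinuousOn lam (Icc 0 1))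
    (c : ℝ) (hc : 0 < c) (hlam : ∀ y ∈ Icc (0:ℝ) 1, c ≤ lam y) :
    ∃ C : ℝ, 0 < C ∧ ∀ h : ℝ → ℝ, Measurable h →
      MemLp h 2 (volume.restrict (Icc (0:ℝ) 1)) →
      (C ^ 2 * ∫ y in Icc (0:ℝ) 1, h y ^ 2 ≤
        ∫ p in (Icc (0:ℝ) 1) ×ˢ (Icc (0:ℝ) 1),
          (-(Real.exp (α * p.2)) * (∫ s in (0:ℝ)..p.1, h s) + h p.1 / lam p.1) ^ 2) ∧
      ((∀ᵐ p ∂(volume.restrict ((Icc (0:ℝ) 1) ×ˢ (Icc (0:ℝ) 1))),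
          -(Real.exp (α * p.2)) * (∫ s in (0:ℝ)..p.1, h s) + h p.1 / lam p.1 = 0) →
        (∀ᵐ y ∂(volume.restrict (Icc (0:ℝ) 1)), h y = 0)) := by
  set μ := volume.restrict (Icc (0:ℝ) 1)
  have : IsProbabilityMeasure μ := ⟨by simp [μ]⟩
  obtain ⟨M, hM⟩ := isCompact_Icc.exists_bound_of_continuousOn hlamc
  have h0 : (0:ℝ) ∈ Icc (0:ℝ) 1 := ⟨le_rfl, zero_le_one⟩
  have hMpos : 0 < M := hc.trans_le ((hlam 0 h0).trans ((le_abs_self _).trans (hM 0 h0)))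
  set b := ∫ v, exp (α * v) ∂μ
  set D := M ^ 2 * (2 * b ^ 2 * (M * exp (M * |b|)) ^ 2 + 2)
  have hD : 0 < D := by positivity
  refine ⟨√D⁻¹, by positivity, fun h _ (hh : MemLp h 2 μ) => ?_⟩
  set F : ℝ → ℝ := fun y => ∫ s in (0:ℝ)..y, h s
  have hK : MemLp (fun v => exp (α * v)) ⊤ μ :=
    (by fun_prop : Continuous fun v => exp (α * v)).continuousOn.memLp_top_of_isCompact
      isCompact_Icc measurableSet_Icc
  have hF : MemLp F ⊤ μ := by
    refine ContinuousOn.memLp_top_of_isCompact ?_ isCompact_Icc measurableSet_Icc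
    simpa using intervalIntegral.continuousOn_primitive_interval
      (IntegrableOn.mono_set (hh.integrable one_le_two) (uIcc_of_le zero_le_one).le)
  have hg : MemLp (fun y => h y / lam y) 2 μ :=
    hh.div_of_le (hlamc.aestronglyMeasurable measurableSet_Icc) hc
      ((ae_restrict_iff' measurableSet_Icc).2 (.of_forall hlam))
  have he : MemLp (fun y => h y / lam y - b * F y) 2 μ :=
    hg.sub ((hF.mono_exponent le_top).const_mul b)
  have lower := integral_sq_le_integral_prod_sq (K := fun v => exp (α * v)) hK hF hg
  rw [show μ.prod μ = volume.restrict (Icc (0:ℝ) 1 ×ˢ Icc (0:ℝ) 1) by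
    rw [Measure.volume_eq_prod, Measure.prod_restrict]] at lower
  have upper := integral_sq_le_of_eq_mul_primitive_add (b := b) (fun y hy => hM y hy) hh he
    fun y hy => by field_simp [(hc.trans_le (hlam y hy)).ne']; ring
  have coercive : √D⁻¹ ^ 2 * ∫ y in Icc (0:ℝ) 1, h y ^ 2 ≤
      ∫ p in (Icc (0:ℝ) 1) ×ˢ (Icc (0:ℝ) 1),
        (-(Real.exp (α * p.2)) * (∫ s in (0:ℝ)..p.1, h s) + h p.1 / lam p.1) ^ 2 := by
    rw [sq_sqrt (inv_nonneg.2 hD.le), inv_mul_le_iff₀ hD]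
    exact upper.trans (mul_le_mul_of_nonneg_left lower hD.le)
  exact ⟨coercive, ae_eq_zero_of_mul_integral_sq_le (by positivity) hh coercive⟩
end

section
/- Let T, C, and W be random variables (W possibly vector-valued) on a probability space such that T and C are conditionally independent given W. Let U = φ(W) for a measurable function φ, and suppose that the conditional distribution of T given W depends on W only through U (i.e., T is conditionally independent of W given U). Then T and C are conditionally independent given U. -/
open MeasureTheory

/-- If `T` and `C` are conditionally independent given `W`, `U = φ(W)`, and the conditional
distribution of `T` given `W` depends on `W` only through `U`
(`E[f(T)|W] = E[f(T)|U]` a.s. for all bounded measurable `f`), then `T` and `C` are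
conditionally independent given `U`. -/
theorem stmt3 {Ω 𝒲 𝒰 : Type*} [MeasurableSpace Ω] [MeasurableSpace 𝒲] [MeasurableSpace 𝒰]
    (μ : Measure Ω) [IsProbabilityMeasure μ]
    (T C : Ω → ℝ) (W : Ω → 𝒲) (φ : 𝒲 → 𝒰)
    (hT : Measurable T) (hC : Measurable C) (hW : Measurable W) (hφ : Measurable φ)
    (mW : MeasurableSpace Ω) (mU : MeasurableSpace Ω)
    (hmW : mW = MeasurableSpace.comap W inferInstance)
    (hmU : mU = MeasurableSpace.comap (φ ∘ W) inferInstance)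
    (hcondindep : ∀ f g : ℝ → ℝ, Measurable f → Measurable g →
      (∃ M, ∀ x, |f x| ≤ M) → (∃ M, ∀ x, |g x| ≤ M) →
      μ[fun ω => f (T ω) * g (C ω) | mW] =ᵐ[μ]
        fun ω => (μ[fun ω' => f (T ω') | mW]) ω * (μ[fun ω' => g (C ω') | mW]) ω)
    (hred : ∀ f : ℝ → ℝ, Measurable f → (∃ M, ∀ x, |f x| ≤ M) →
      μ[fun ω => f (T ω) | mW] =ᵐ[μ] μ[fun ω => f (T ω) | mU]) :
    ∀ f g : ℝ → ℝ, Measurable f → Measurable g →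
      (∃ M, ∀ x, |f x| ≤ M) → (∃ M, ∀ x, |g x| ≤ M) →
      μ[fun ω => f (T ω) * g (C ω) | mU] =ᵐ[μ]
        fun ω => (μ[fun ω' => f (T ω') | mU]) ω * (μ[fun ω' => g (C ω') | mU]) ω := by
  rename_i mΩ m𝒲 m𝒰 hprob
  intro f g hf hg hfb hgb
  obtain ⟨Mf, hMf⟩ := hfb
  obtain ⟨Mg, hMg⟩ := hgb
  have hle : mU ≤ mW := by
    rw [hmU, hmW, ← MeasurableSpace.comap_comp]
    exact MeasurableSpace.comap_mono (hφ.comap_le)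
  have hWle : mW ≤ mΩ := by
    rw [hmW]; exact hW.comap_le
  have hUle : mU ≤ mΩ := hle.trans hWle
  set ft : Ω → ℝ := fun ω => f (T ω) with hft_def
  set gc : Ω → ℝ := fun ω => g (C ω) with hgc_def
  have hft_m : @Measurable Ω ℝ mΩ _ ft := hf.comp hT
  have hgc_m : @Measurable Ω ℝ mΩ _ gc := hg.comp hC
  have hft_int : Integrable ft μ :=
    ⟨hft_m.aestronglyMeasurable, HasFiniteIntegral.of_bounded
      (C := Mf) (Filter.Eventually.of_forall fun ω => by
        simpa [Real.norm_eq_abs] using hMf (T ω))⟩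
  have hgc_int : Integrable gc μ :=
    ⟨hgc_m.aestronglyMeasurable, HasFiniteIntegral.of_bounded
      (C := Mg) (Filter.Eventually.of_forall fun ω => by
        simpa [Real.norm_eq_abs] using hMg (C ω))⟩
  -- bound on the conditional expectation of ft given mU
  have hMf0 : (0:ℝ) ≤ Mf := le_trans (abs_nonneg _) (hMf 0)
  have hbdd : ∀ᵐ ω ∂μ, |(μ[ft | mU]) ω| ≤ (⟨Mf, hMf0⟩ : NNReal) := by
    refine ae_bdd_condExp_of_ae_bdd ?_
    exact Filter.Eventually.of_forall fun ω => hMf (T ω)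
  -- step 1: tower property
  have h1 : μ[fun ω => ft ω * gc ω | mU] =ᵐ[μ] μ[μ[fun ω => ft ω * gc ω | mW] | mU] :=
    (condExp_condExp_of_le hle hWle).symm
  -- step 2: conditional independence
  have h2 : μ[μ[fun ω => ft ω * gc ω | mW] | mU]
      =ᵐ[μ] μ[fun ω => (μ[ft | mW]) ω * (μ[gc | mW]) ω | mU] :=
    condExp_congr_ae (hcondindep f g hf hg ⟨Mf, hMf⟩ ⟨Mg, hMg⟩)
  -- step 3: replace E[ft|mW] by E[ft|mU]
  have h3 : μ[fun ω => (μ[ft | mW]) ω * (μ[gc | mW]) ω | mU]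
      =ᵐ[μ] μ[fun ω => (μ[ft | mU]) ω * (μ[gc | mW]) ω | mU] := by
    refine condExp_congr_ae ?_
    filter_upwards [hred f hf ⟨Mf, hMf⟩] with ω hω
    rw [hω]
  -- step 4: pull out E[ft|mU]
  have hsm : StronglyMeasurable[mU] (μ[ft | mU]) := stronglyMeasurable_condExp
  have hprod_int : Integrable ((μ[ft | mU]) * (μ[gc | mW])) μ := by
    refine Integrable.bdd_mul (c := Mf) (integrable_condExp) (hsm.mono hUle).aestronglyMeasurable ?_
    filter_upwards [hbdd] with ω hω
    simpa [Real.norm_eq_abs] using hω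
  have h4 : μ[(μ[ft | mU]) * (μ[gc | mW]) | mU]
      =ᵐ[μ] (μ[ft | mU]) * μ[μ[gc | mW] | mU] :=
    condExp_mul_of_stronglyMeasurable_left hsm hprod_int integrable_condExp
  -- step 5: tower for gc
  have h5 : μ[μ[gc | mW] | mU] =ᵐ[μ] μ[gc | mU] := condExp_condExp_of_le hle hWle
  calc μ[fun ω => ft ω * gc ω | mU]
      =ᵐ[μ] μ[μ[fun ω => ft ω * gc ω | mW] | mU] := h1
    _ =ᵐ[μ] μ[fun ω => (μ[ft | mW]) ω * (μ[gc | mW]) ω | mU] := h2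
    _ =ᵐ[μ] μ[fun ω => (μ[ft | mU]) ω * (μ[gc | mW]) ω | mU] := h3
    _ =ᵐ[μ] (μ[ft | mU]) * μ[μ[gc | mW] | mU] := h4
    _ =ᵐ[μ] fun ω => (μ[ft | mU]) ω * (μ[gc | mU]) ω := by
        filter_upwards [h5] with ω hω
        simp [hω]
end

section
/- Let T, C, and W be random variables with T and C conditionally independent given W, and let U = φ(W) for measurable φ. Suppose that the conditional distribution of C given W depends on W only through U (i.e., E[g(C)|W] = E[g(C)|U] a.s. for all bounded measurable g). Then T and C are conditionally independent given U. -/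
open MeasureTheory

/-- If `T` and `C` are conditionally independent given `W`, `U = φ(W)`, and the conditional
distribution of `C` given `W` depends on `W` only through `U`
(`E[g(C)|W] = E[g(C)|U]` a.s. for all bounded measurable `g`), then `T` and `C` are
conditionally independent given `U`. -/
theorem stmt4 {Ω 𝒲 𝒰 : Type*} [MeasurableSpace Ω] [MeasurableSpace 𝒲] [MeasurableSpace 𝒰]
    (μ : Measure Ω) [IsProbabilityMeasure μ]
    (T C : Ω → ℝ) (W : Ω → 𝒲) (φ : 𝒲 → 𝒰)
    (hT : Measurable T) (hC : Measurable C) (hW : Measurable W) (hφ : Measurable φ)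
    (mW : MeasurableSpace Ω) (mU : MeasurableSpace Ω)
    (hmW : mW = MeasurableSpace.comap W inferInstance)
    (hmU : mU = MeasurableSpace.comap (φ ∘ W) inferInstance)
    (hcondindep : ∀ f g : ℝ → ℝ, Measurable f → Measurable g →
      (∃ M, ∀ x, |f x| ≤ M) → (∃ M, ∀ x, |g x| ≤ M) →
      μ[fun ω => f (T ω) * g (C ω) | mW] =ᵐ[μ]
        fun ω => (μ[fun ω' => f (T ω') | mW]) ω * (μ[fun ω' => g (C ω') | mW]) ω)
    (hred : ∀ g : ℝ → ℝ, Measurable g → (∃ M, ∀ x, |g x| ≤ M) →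
      μ[fun ω => g (C ω) | mW] =ᵐ[μ] μ[fun ω => g (C ω) | mU]) :
    ∀ f g : ℝ → ℝ, Measurable f → Measurable g →
      (∃ M, ∀ x, |f x| ≤ M) → (∃ M, ∀ x, |g x| ≤ M) →
      μ[fun ω => f (T ω) * g (C ω) | mU] =ᵐ[μ]
        fun ω => (μ[fun ω' => f (T ω') | mU]) ω * (μ[fun ω' => g (C ω') | mU]) ω := by
  rename_i mΩ m𝒲 m𝒰 _
  intro f g hf hg hbf hbg
  obtain ⟨Mf, hMf⟩ := hbf
  obtain ⟨Mg, hMg⟩ := hbg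
  have hUW : mU ≤ mW := by
    rw [hmU, hmW, ← MeasurableSpace.comap_comp]
    exact MeasurableSpace.comap_mono hφ.comap_le
  have hWle : mW ≤ mΩ := by rw [hmW]; exact hW.comap_le
  have hUle : mU ≤ mΩ := le_trans hUW hWle
  have hintf : Integrable (fun ω => f (T ω)) μ :=
    Integrable.mono' (integrable_const Mf) ((hf.comp hT).aestronglyMeasurable)
      (Filter.Eventually.of_forall fun ω => hMf (T ω))
  have hintg : Integrable (fun ω => g (C ω)) μ :=
    Integrable.mono' (integrable_const Mg) ((hg.comp hC).aestronglyMeasurable)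
      (Filter.Eventually.of_forall fun ω => hMg (C ω))
  have hintfg : Integrable (fun ω => f (T ω) * g (C ω)) μ :=
    Integrable.mono' (integrable_const (|Mf| * |Mg|))
      (((hf.comp hT).mul (hg.comp hC)).aestronglyMeasurable)
      (Filter.Eventually.of_forall fun ω => by
        show |f (T ω) * g (C ω)| ≤ |Mf| * |Mg|
        rw [abs_mul]
        exact mul_le_mul ((hMf (T ω)).trans (le_abs_self _))
          ((hMg (C ω)).trans (le_abs_self _)) (abs_nonneg _) (abs_nonneg _))
  -- bound on E[g|mU]
  have hboundU : ∀ᵐ ω ∂μ, |(μ[fun ω' => g (C ω') | mU]) ω| ≤ |Mg| := by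
    have h1 : (μ[fun ω' => g (C ω') | mU]) ≤ᵐ[μ] fun _ => |Mg| := by
      have := condExp_mono (m := mU) hintg (integrable_const (|Mg|))
        (Filter.Eventually.of_forall fun ω =>
          show g (C ω) ≤ |Mg| from (le_abs_self _).trans ((hMg (C ω)).trans (le_abs_self _)))
      rwa [condExp_const hUle] at this
    have h2 : (fun _ : Ω => -|Mg|) ≤ᵐ[μ] (μ[fun ω' => g (C ω') | mU]) := by
      have := condExp_mono (m := mU) (integrable_const (-|Mg|)) hintg
        (Filter.Eventually.of_forall fun ω =>
          show -|Mg| ≤ g (C ω) from neg_le_of_neg_le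
            (by have := abs_le.mp ((hMg (C ω)).trans (le_abs_self _)); linarith [this.1]))
      rwa [condExp_const hUle] at this
    filter_upwards [h1, h2] with ω hω1 hω2
    exact abs_le.mpr ⟨hω2, hω1⟩
  have hEfW : Integrable (μ[fun ω' => f (T ω') | mW]) μ := integrable_condExp
  -- step 1: tower
  have step1 : μ[fun ω => f (T ω) * g (C ω) | mU]
      =ᵐ[μ] μ[μ[fun ω => f (T ω) * g (C ω) | mW] | mU] :=
    (condExp_condExp_of_le hUW hWle).symm
  -- step 2: apply cond indep inside
  have step2 : μ[μ[fun ω => f (T ω) * g (C ω) | mW] | mU]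
      =ᵐ[μ] μ[fun ω => (μ[fun ω' => f (T ω') | mW]) ω * (μ[fun ω' => g (C ω') | mU]) ω | mU] := by
    refine condExp_congr_ae ?_
    refine (hcondindep f g hf hg ⟨Mf, hMf⟩ ⟨Mg, hMg⟩).trans ?_
    filter_upwards [hred g hg ⟨Mg, hMg⟩] with ω hω
    rw [hω]
  -- step 3: pull out mU-measurable factor
  have hprodint : Integrable
      (fun ω => (μ[fun ω' => g (C ω') | mU]) ω * (μ[fun ω' => f (T ω') | mW]) ω) μ :=
    Integrable.bdd_mul hEfW (stronglyMeasurable_condExp.mono hUle).aestronglyMeasurable hboundU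
  have step3 : μ[(μ[fun ω' => g (C ω') | mU]) * (μ[fun ω' => f (T ω') | mW]) | mU]
      =ᵐ[μ] (μ[fun ω' => g (C ω') | mU]) * μ[μ[fun ω' => f (T ω') | mW] | mU] :=
    condExp_mul_of_stronglyMeasurable_left stronglyMeasurable_condExp hprodint hEfW
  have step4 : μ[μ[fun ω' => f (T ω') | mW] | mU] =ᵐ[μ] μ[fun ω' => f (T ω') | mU] :=
    condExp_condExp_of_le hUW hWle
  refine step1.trans (step2.trans ?_)
  have heq : (fun ω => (μ[fun ω' => f (T ω') | mW]) ω * (μ[fun ω' => g (C ω') | mU]) ω)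
      = (μ[fun ω' => g (C ω') | mU]) * (μ[fun ω' => f (T ω') | mW]) := by
    funext ω; simp [mul_comm]
  rw [heq]
  refine step3.trans ?_
  filter_upwards [step4] with ω hω
  simp only [Pi.mul_apply, hω, mul_comm]
end

section
/- Suppose α, α₀ ∈ ℝ and Λ, Λ₀ : [0,1] → [0,∞) are nondecreasing with Λ(0) = Λ₀(0) = 0, and suppose that for every s ∈ [0,1], exp(-e^{αv}Λ(s)) = exp(-e^{α₀v}Λ₀(s)) for almost every v ∈ [0,1], with Λ₀ not identically zero. Then α = α₀ and Λ = Λ₀ on [0,1]. -/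
open MeasureTheory Set

/-- Identifiability: if `Λ, Λ₀ : [0,1] → [0,∞)` are nondecreasing with `Λ(0) = Λ₀(0) = 0`,
`Λ₀` not identically zero, and for every `s ∈ [0,1]`,
`exp(-e^{αv}Λ(s)) = exp(-e^{α₀v}Λ₀(s))` for a.e. `v ∈ [0,1]`, then `α = α₀` and
`Λ = Λ₀` on `[0,1]`. -/
theorem stmt6 (α α₀ : ℝ) (Λ Λ₀ : ℝ → ℝ)
    (hmono : MonotoneOn Λ (Icc 0 1)) (hmono₀ : MonotoneOn Λ₀ (Icc 0 1))
    (hnn : ∀ s ∈ Icc (0:ℝ) 1, 0 ≤ Λ s) (hnn₀ : ∀ s ∈ Icc (0:ℝ) 1, 0 ≤ Λ₀ s)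
    (h0 : Λ 0 = 0) (h00 : Λ₀ 0 = 0)
    (hne : ∃ s ∈ Icc (0:ℝ) 1, Λ₀ s ≠ 0)
    (heq : ∀ s ∈ Icc (0:ℝ) 1, ∀ᵐ v ∂(volume.restrict (Icc (0:ℝ) 1)),
      Real.exp (-(Real.exp (α * v) * Λ s)) = Real.exp (-(Real.exp (α₀ * v) * Λ₀ s))) :
    α = α₀ ∧ ∀ s ∈ Icc (0:ℝ) 1, Λ s = Λ₀ s := by
  -- upgrade a.e. equality to pointwise equality on Icc 0 1
  have key : ∀ s ∈ Icc (0:ℝ) 1, ∀ v ∈ Icc (0:ℝ) 1,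
      Real.exp (α * v) * Λ s = Real.exp (α₀ * v) * Λ₀ s := by
    intro s hs v hv
    have hc1 : ContinuousOn (fun v : ℝ => Real.exp (-(Real.exp (α * v) * Λ s)))
        (Icc 0 1) := by fun_prop
    have hc2 : ContinuousOn (fun v : ℝ => Real.exp (-(Real.exp (α₀ * v) * Λ₀ s)))
        (Icc 0 1) := by fun_prop
    have hsub : Icc (0:ℝ) 1 ⊆ closure (interior (Icc (0:ℝ) 1)) := by
      rw [interior_Icc, closure_Ioo one_ne_zero.symm]
    have := Measure.eqOn_of_ae_eq (heq s hs) hc1 hc2 hsub hv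
    simpa using Real.exp_injective (by simpa using this)
  have hΛ : ∀ s ∈ Icc (0:ℝ) 1, Λ s = Λ₀ s := by
    intro s hs
    have := key s hs 0 (by norm_num)
    simpa using this
  refine ⟨?_, hΛ⟩
  obtain ⟨s, hs, hs0⟩ := hne
  have h1 := key s hs 1 (by norm_num)
  rw [hΛ s hs] at h1
  have := mul_right_cancel₀ hs0 h1
  exact Real.exp_injective (by simpa using this)
end

section
/- Let η : [0,1] → ℝ be measurable and bounded with ‖η‖_∞ ≤ M, and define the normalized density f_η(u) = exp(η(u)) / ∫₀¹ exp(η(t)) dt. Then for any two such functions η, η', ‖f_η - f_{η'}‖_{L^∞([0,1])} ≤ C(M) ‖η - η'‖_{L^∞([0,1])}, where C(M) is a constant depending only on M (one may take C(M) = 2e^{4M}). -/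
/-!
A mean-value bound `|e^a - e^b| ≤ e^M |a - b|` for `a, b ≤ M` controls the numerators
pointwise and, after integration, the difference of the normalizing constants, which both lie
in `[e^{-M}, e^M]`. Writing
`x/A - y/B = ((x - y) B + y (B - A)) / (A B)`, the numerator is at most `2 e^{2M} δ` and the
denominator at least `e^{-2M}`.
-/

open MeasureTheory Set

namespace Real

theorem abs_exp_sub_exp_le_of_le {a b M : ℝ} (ha : a ≤ M) (hb : b ≤ M) :
    |exp a - exp b| ≤ exp M * |a - b| := by
  wlog hba : b ≤ a generalizing a b
  · rw [abs_sub_comm, abs_sub_comm a]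
    exact this hb ha (le_of_not_ge hba)
  rw [abs_of_nonneg (sub_nonneg.2 (exp_le_exp.2 hba)), abs_of_nonneg (sub_nonneg.2 hba)]
  calc exp a - exp b = exp a * (1 - exp (-(a - b))) := by
        rw [mul_sub, ← exp_add]; ring_nf
    _ ≤ exp M * (a - b) :=
        mul_le_mul (exp_le_exp.2 ha) (by linarith [add_one_le_exp (-(a - b))])
          (sub_nonneg.2 (exp_le_one_iff.2 (by linarith))) (exp_pos M).le

end Real

theorem abs_div_sub_div_le {x y A B : ℝ} (hA : 0 < A) (hB : 0 < B) :
    |x / A - y / B| ≤ (|x - y| * B + |y| * |B - A|) / (A * B) := by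
  rw [div_sub_div _ _ hA.ne' hB.ne', abs_div, abs_of_pos (mul_pos hA hB)]
  gcongr
  calc |x * B - A * y| = |(x - y) * B + y * (B - A)| := by ring_nf
    _ ≤ |x - y| * B + |y| * |B - A| := by
        grw [abs_add_le, abs_mul, abs_mul, abs_of_pos hB]

section ProbabilityMeasure

variable {α : Type*} [MeasurableSpace α] {μ : Measure α} [IsProbabilityMeasure μ]
  {η η' : α → ℝ} {M δ : ℝ}

theorem integrable_exp_of_ae_le (hm : AEStronglyMeasurable η μ) (hb : ∀ᵐ t ∂μ, η t ≤ M) :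
    Integrable (fun t => Real.exp (η t)) μ := by
  refine Integrable.mono' (integrable_const (Real.exp M))
    (Real.continuous_exp.comp_aestronglyMeasurable hm) ?_
  filter_upwards [hb] with t ht
  rw [Real.norm_eq_abs, abs_of_pos (Real.exp_pos _)]
  exact Real.exp_le_exp.2 ht

theorem integral_exp_mem_Icc (hm : AEStronglyMeasurable η μ) (hb : ∀ᵐ t ∂μ, |η t| ≤ M) :
    ∫ t, Real.exp (η t) ∂μ ∈ Icc (Real.exp (-M)) (Real.exp M) := by
  have hint := integrable_exp_of_ae_le hm (hb.mono fun t ht => (abs_le.1 ht).2)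
  constructor
  · calc Real.exp (-M) = ∫ _, Real.exp (-M) ∂μ := by simp
      _ ≤ ∫ t, Real.exp (η t) ∂μ := integral_mono_ae (integrable_const _) hint
          (hb.mono fun t ht => Real.exp_le_exp.2 (neg_le_of_abs_le ht))
  · calc ∫ t, Real.exp (η t) ∂μ ≤ ∫ _, Real.exp M ∂μ := integral_mono_ae hint
          (integrable_const _) (hb.mono fun t ht => Real.exp_le_exp.2 (le_of_abs_le ht))
      _ = Real.exp M := by simp

theorem abs_integral_exp_sub_integral_exp_le (hm : AEStronglyMeasurable η μ)
    (hm' : AEStronglyMeasurable η' μ) (hb : ∀ᵐ t ∂μ, η t ≤ M) (hb' : ∀ᵐ t ∂μ, η' t ≤ M)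
    (hδ : ∀ᵐ t ∂μ, |η t - η' t| ≤ δ) :
    |∫ t, Real.exp (η t) ∂μ - ∫ t, Real.exp (η' t) ∂μ| ≤ Real.exp M * δ := by
  rw [← integral_sub (integrable_exp_of_ae_le hm hb) (integrable_exp_of_ae_le hm' hb'),
    ← Real.norm_eq_abs]
  refine (norm_integral_le_of_norm_le_const (C := Real.exp M * δ) ?_).trans_eq (by simp)
  filter_upwards [hb, hb', hδ] with t ht ht' htδ
  exact (Real.abs_exp_sub_exp_le_of_le ht ht').trans (by gcongr)

theorem abs_exp_div_integral_exp_sub_le (hm : AEStronglyMeasurable η μ)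
    (hm' : AEStronglyMeasurable η' μ) (hb : ∀ᵐ t ∂μ, |η t| ≤ M) (hb' : ∀ᵐ t ∂μ, |η' t| ≤ M)
    (hδ : ∀ᵐ t ∂μ, |η t - η' t| ≤ δ) {x y : ℝ} (hx : |x| ≤ M) (hy : |y| ≤ M)
    (hxy : |x - y| ≤ δ) :
    |Real.exp x / ∫ t, Real.exp (η t) ∂μ - Real.exp y / ∫ t, Real.exp (η' t) ∂μ|
      ≤ 2 * Real.exp (4 * M) * δ := by
  set A := ∫ t, Real.exp (η t) ∂μ
  set B := ∫ t, Real.exp (η' t) ∂μ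
  obtain ⟨hA_ge, -⟩ := integral_exp_mem_Icc hm hb
  obtain ⟨hB_ge, hB_le⟩ := integral_exp_mem_Icc hm' hb'
  have hA := (Real.exp_pos _).trans_le hA_ge
  have hB := (Real.exp_pos _).trans_le hB_ge
  have hBA : |B - A| ≤ Real.exp M * δ := by
    rw [abs_sub_comm]
    exact abs_integral_exp_sub_integral_exp_le hm hm' (hb.mono fun t ht => le_of_abs_le ht)
      (hb'.mono fun t ht => le_of_abs_le ht) hδ
  have hxy' : |Real.exp x - Real.exp y| ≤ Real.exp M * δ :=
    (Real.abs_exp_sub_exp_le_of_le (le_of_abs_le hx) (le_of_abs_le hy)).trans (by gcongr)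
  have hy' : |Real.exp y| ≤ Real.exp M := by
    rw [abs_of_pos (Real.exp_pos y)]; exact Real.exp_le_exp.2 (le_of_abs_le hy)
  have hAB : Real.exp (-M) * Real.exp (-M) ≤ A * B := by gcongr
  have hδ0 : 0 ≤ δ := (abs_nonneg _).trans hxy
  calc _ ≤ (|Real.exp x - Real.exp y| * B + |Real.exp y| * |B - A|) / (A * B) :=
        abs_div_sub_div_le hA hB
    _ ≤ (Real.exp M * δ * Real.exp M + Real.exp M * (Real.exp M * δ))
          / (Real.exp (-M) * Real.exp (-M)) := by gcongr
    _ = 2 * Real.exp (4 * M) * δ := by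
        rw [← Real.exp_add, div_eq_mul_inv, ← Real.exp_neg]
        rw [show 4 * M = M + M + -(-M + -M) by ring, Real.exp_add, Real.exp_add]
        ring

end ProbabilityMeasure

instance : IsProbabilityMeasure (volume.restrict (Icc (0 : ℝ) 1)) :=
  ⟨by simp⟩

theorem stmt7_general (M δ : ℝ) (η η' : ℝ → ℝ)
    (hηm : Measurable η) (hη'm : Measurable η')
    (hηb : ∀ u ∈ Icc (0:ℝ) 1, |η u| ≤ M) (hη'b : ∀ u ∈ Icc (0:ℝ) 1, |η' u| ≤ M)
    (hδ : ∀ u ∈ Icc (0:ℝ) 1, |η u - η' u| ≤ δ) :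
    ∀ u ∈ Icc (0:ℝ) 1,
      |Real.exp (η u) / (∫ t in Icc (0:ℝ) 1, Real.exp (η t))
        - Real.exp (η' u) / (∫ t in Icc (0:ℝ) 1, Real.exp (η' t))|
      ≤ 2 * Real.exp (4 * M) * δ := by
  have onIcc {p : ℝ → Prop} (h : ∀ u ∈ Icc (0:ℝ) 1, p u) :
      ∀ᵐ t ∂volume.restrict (Icc (0:ℝ) 1), p t :=
    (ae_restrict_mem measurableSet_Icc).mono h
  intro u hu
  exact abs_exp_div_integral_exp_sub_le hηm.aestronglyMeasurable hη'm.aestronglyMeasurable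
    (onIcc hηb) (onIcc hη'b) (onIcc hδ) (hηb u hu) (hη'b u hu) (hδ u hu)

/-- Lipschitz continuity of the normalization `η ↦ f_η = exp(η)/∫₀¹ exp(η)`:
for `‖η‖_∞, ‖η'‖_∞ ≤ M` and `‖η - η'‖_∞ ≤ δ` on `[0,1]`,
`‖f_η - f_{η'}‖_{L^∞([0,1])} ≤ 2 e^{4M} δ`. -/
theorem stmt7 (M δ : ℝ) (hM : 0 ≤ M) (η η' : ℝ → ℝ)
    (hηm : Measurable η) (hη'm : Measurable η')
    (hηb : ∀ u ∈ Icc (0:ℝ) 1, |η u| ≤ M) (hη'b : ∀ u ∈ Icc (0:ℝ) 1, |η' u| ≤ M)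
    (hδ : ∀ u ∈ Icc (0:ℝ) 1, |η u - η' u| ≤ δ) :
    ∀ u ∈ Icc (0:ℝ) 1,
      |Real.exp (η u) / (∫ t in Icc (0:ℝ) 1, Real.exp (η t))
        - Real.exp (η' u) / (∫ t in Icc (0:ℝ) 1, Real.exp (η' t))|
      ≤ 2 * Real.exp (4 * M) * δ :=
  stmt7_general M δ η η' hηm hη'm hηb hη'b hδ
end
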